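/- Suppose τ₀, τ₁, τ₂ ∈ H satisfy ⟨τ₀,τ₀⟩ + ⟨τ₁,τ₁⟩ + ⟨τ₂,τ₂⟩ = 1, that Φ₀₀, Φ₀₁, Φ₁₀, Φ₁₁ are all unit vectors, and that ⟨Φ₀₀, Φ₁₀⟩ = 0. Then ⟨τ₀,τ₀⟩ = ⟨τ₁,τ₁⟩ = ⟨τ₂,τ₂⟩ = 1/3. -/

import Mathlib

open scoped BigOperators ComplexConjugate

variable {H : Type*} [NormedAddCommGroup H] [InnerProductSpace ℂ H]

/-- The primitive cube root of unity `ω = e^{2πi/3}`. -/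
noncomputable def ω : ℂ := Complex.exp (2 * Real.pi * Complex.I / 3)

/-- `|v_j⟩ = (1/√3)(i|0⟩ + ω^{-j}|1⟩ + ω^{-2j}|2⟩)` in `ℂ³`. -/
noncomputable def v (j : Fin 3) : Fin 3 → ℂ := fun k =>
  ((Real.sqrt 3 : ℂ))⁻¹ * (if k = 0 then Complex.I else ω ^ (-((j : ℕ) * (k : ℕ) : ℤ)))

/-- `|v_j'⟩ = (1/√3)(|0⟩ + ω^{-j}|1⟩ + i ω^{-2j}|2⟩)` in `ℂ³`. -/
noncomputable def v' (j : Fin 3) : Fin 3 → ℂ := fun k =>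
  ((Real.sqrt 3 : ℂ))⁻¹ * (if k = 2 then Complex.I else 1) * ω ^ (-((j : ℕ) * (k : ℕ) : ℤ))

/-- The inner product on `ℂ³ ⊗ H`, viewed as triples of elements of `H`:
`⟨x, y⟩ = ∑ₖ ⟨xₖ, yₖ⟩` (conjugate-linear in the first argument). -/
noncomputable def ip (x y : Fin 3 → H) : ℂ := ∑ k, (inner ℂ (x k) (y k) : ℂ)

/-- `Φ₀₀ = √2 [ |v₀⟩⊗τ₀ − ½|v₁⟩⊗τ₁ − ½|v₂⟩⊗τ₂ ]` in `ℂ³ ⊗ H`. -/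
noncomputable def Phi00 (τ₀ τ₁ τ₂ : H) : Fin 3 → H := fun k =>
  (Real.sqrt 2 : ℂ) • (v 0 k • τ₀ - ((1/2 : ℂ) * v 1 k) • τ₁ - ((1/2 : ℂ) * v 2 k) • τ₂)

/-- `Φ₀₁ = √2 [ −(√3/2)|v₁'⟩⊗τ₁ + (√3/2)|v₂'⟩⊗τ₂ ]` in `ℂ³ ⊗ H`. -/
noncomputable def Phi01 (τ₁ τ₂ : H) : Fin 3 → H := fun k =>
  (Real.sqrt 2 : ℂ) • ((-((Real.sqrt 3 : ℂ) / 2) * v' 1 k) • τ₁ +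
    (((Real.sqrt 3 : ℂ) / 2) * v' 2 k) • τ₂)

/-- `Φ₁₀ = √2 [ (√3/2)|v₁⟩⊗τ₁ − (√3/2)|v₂⟩⊗τ₂ ]` in `ℂ³ ⊗ H`. -/
noncomputable def Phi10 (τ₁ τ₂ : H) : Fin 3 → H := fun k =>
  (Real.sqrt 2 : ℂ) • ((((Real.sqrt 3 : ℂ) / 2) * v 1 k) • τ₁ -
    (((Real.sqrt 3 : ℂ) / 2) * v 2 k) • τ₂)

/-- `Φ₁₁ = √2 [ |v₀'⟩⊗τ₀ − ½|v₁'⟩⊗τ₁ − ½|v₂'⟩⊗τ₂ ]` in `ℂ³ ⊗ H`. -/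
noncomputable def Phi11 (τ₀ τ₁ τ₂ : H) : Fin 3 → H := fun k =>
  (Real.sqrt 2 : ℂ) • (v' 0 k • τ₀ - ((1/2 : ℂ) * v' 1 k) • τ₁ - ((1/2 : ℂ) * v' 2 k) • τ₂)

/-!
The vectors `v₀, v₁, v₂` are orthonormal in `ℂ³`: off the diagonal their inner products are
multiples of `1 + ω + ω² = 0`. Hence inner products of the `Φᵢⱼ` collapse to combinations of
the `⟨τᵢ, τⱼ⟩`: `⟨Φ₁₀, Φ₁₀⟩ = (3/2)(⟨τ₁,τ₁⟩ + ⟨τ₂,τ₂⟩)` and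
`⟨Φ₀₀, Φ₁₀⟩ = (√3/2)(⟨τ₂,τ₂⟩ - ⟨τ₁,τ₁⟩)`. So `⟨τ₁,τ₁⟩ = ⟨τ₂,τ₂⟩ = 1/3`, and the
normalisation gives `⟨τ₀,τ₀⟩ = 1/3`.
-/

lemma ofReal_sqrt_ofNat_sq (n : ℕ) [n.AtLeastTwo] :
    ((Real.sqrt (OfNat.ofNat n) : ℝ) : ℂ) ^ 2 = OfNat.ofNat n := by
  rw [← Complex.ofReal_pow, Real.sq_sqrt (Nat.ofNat_nonneg _), Complex.ofReal_ofNat]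

lemma isPrimitiveRoot_ω : IsPrimitiveRoot ω 3 := by
  simpa [ω] using Complex.isPrimitiveRoot_exp 3 (by norm_num)

lemma ω_pow_three : ω ^ 3 = 1 := isPrimitiveRoot_ω.pow_eq_one

lemma ω_pow_of_three_le {n : ℕ} (hn : 3 ≤ n) : ω ^ n = ω ^ (n - 3) := by
  rw [← Nat.sub_add_cancel hn, pow_add, ω_pow_three, mul_one, Nat.add_sub_cancel]

lemma one_add_ω_add_ω_sq : 1 + ω + ω ^ 2 = 0 := by
  simpa [Finset.sum_range_succ] using isPrimitiveRoot_ω.geom_sum_eq_zero (by norm_num)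

lemma ω_inv : ω⁻¹ = ω ^ 2 := inv_eq_of_mul_eq_one_right (by linear_combination ω_pow_three)

lemma inv_ω_pow (n : ℕ) : (ω ^ n)⁻¹ = ω ^ (2 * n) := by rw [← inv_pow, ω_inv, ← pow_mul]

lemma conj_ω : conj ω = ω ^ 2 := by
  rw [← ω_inv, Complex.inv_eq_conj (isPrimitiveRoot_ω.norm'_eq_one (by norm_num))]

lemma star_v_dotProduct_v (j k : Fin 3) : star (v j) ⬝ᵥ v k = if j = k then 1 else 0 := by
  fin_cases j <;> fin_cases k <;>
    simp [dotProduct, Fin.sum_univ_three, v, conj_ω, zpow_neg, inv_ω_pow, ← pow_mul] <;>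
    field_simp <;> ring_nf <;> norm_num [ω_pow_of_three_le, ofReal_sqrt_ofNat_sq 3] <;>
    linear_combination one_add_ω_add_ω_sq

def pureTensor {ι : Type*} (a : ι → ℂ) (x : H) : ι → H := fun k => a k • x

section ip

variable (x y z : Fin 3 → H) (c : ℂ)

lemma ip_sub_left : ip (x - y) z = ip x z - ip y z := by
  simp only [ip, Pi.sub_apply, inner_sub_left, Finset.sum_sub_distrib]

lemma ip_sub_right : ip x (y - z) = ip x y - ip x z := by
  simp only [ip, Pi.sub_apply, inner_sub_right, Finset.sum_sub_distrib]

lemma ip_smul_left : ip (c • x) y = conj c * ip x y := by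
  simp only [ip, Pi.smul_apply, inner_smul_left, Finset.mul_sum]

lemma ip_smul_right : ip x (c • y) = c * ip x y := by
  simp only [ip, Pi.smul_apply, inner_smul_right, Finset.mul_sum]

lemma ip_pureTensor (a b : Fin 3 → ℂ) (x y : H) :
    ip (pureTensor a x) (pureTensor b y) = (star a ⬝ᵥ b) * inner ℂ x y := by
  simp only [ip, pureTensor, inner_smul_left, inner_smul_right, dotProduct, Finset.sum_mul,
    Pi.star_apply, RCLike.star_def, mul_assoc, mul_left_comm]

end ip

section Phi

variable (τ₀ τ₁ τ₂ : H)

lemma Phi00_eq : Phi00 τ₀ τ₁ τ₂ = (Real.sqrt 2 : ℂ) • (pureTensor (v 0) τ₀ -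
    (1 / 2 : ℂ) • pureTensor (v 1) τ₁ - (1 / 2 : ℂ) • pureTensor (v 2) τ₂) := by
  funext k
  simp [Phi00, pureTensor, mul_smul]

lemma Phi10_eq : Phi10 τ₁ τ₂ =
    (Real.sqrt 2 * (Real.sqrt 3 / 2) : ℂ) • (pureTensor (v 1) τ₁ - pureTensor (v 2) τ₂) := by
  funext k
  simp [Phi10, pureTensor, mul_smul, smul_sub]

lemma ip_Phi10_self :
    ip (Phi10 τ₁ τ₂) (Phi10 τ₁ τ₂) = 3 / 2 * (inner ℂ τ₁ τ₁ + inner ℂ τ₂ τ₂) := by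
  simp only [Phi10_eq, ip_smul_left, ip_smul_right, ip_sub_left, ip_sub_right, ip_pureTensor,
    star_v_dotProduct_v, map_mul, map_div₀, Complex.conj_ofReal, map_ofNat, Fin.reduceEq,
    ↓reduceIte, one_mul, zero_mul, sub_zero, zero_sub]
  linear_combination (inner ℂ τ₁ τ₁ + inner ℂ τ₂ τ₂) *
    ((Real.sqrt 3 : ℂ) ^ 2 / 4 * ofReal_sqrt_ofNat_sq 2 + ofReal_sqrt_ofNat_sq 3 / 2)

lemma ip_Phi00_Phi10 :
    ip (Phi00 τ₀ τ₁ τ₂) (Phi10 τ₁ τ₂) = Real.sqrt 3 / 2 * (inner ℂ τ₂ τ₂ - inner ℂ τ₁ τ₁) := by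
  simp only [Phi00_eq, Phi10_eq, ip_smul_left, ip_smul_right, ip_sub_left, ip_sub_right,
    ip_pureTensor, star_v_dotProduct_v, map_div₀, Complex.conj_ofReal, map_ofNat, map_one,
    Fin.reduceEq, ↓reduceIte, one_mul, zero_mul, zero_sub]
  linear_combination
    (Real.sqrt 3 : ℂ) / 4 * (inner ℂ τ₂ τ₂ - inner ℂ τ₁ τ₁) * ofReal_sqrt_ofNat_sq 2

end Phi

theorem tau_norms_eq_third_general {H : Type*} [NormedAddCommGroup H] [InnerProductSpace ℂ H]
    (τ₀ τ₁ τ₂ : H)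
    (hnorm : (inner ℂ τ₀ τ₀ : ℂ) + inner ℂ τ₁ τ₁ + inner ℂ τ₂ τ₂ = 1)
    (h10 : ip (Phi10 τ₁ τ₂) (Phi10 τ₁ τ₂) = 1)
    (horth : ip (Phi00 τ₀ τ₁ τ₂) (Phi10 τ₁ τ₂) = 0) :
    (inner ℂ τ₀ τ₀ : ℂ) = 1/3 ∧ (inner ℂ τ₁ τ₁ : ℂ) = 1/3 ∧ (inner ℂ τ₂ τ₂ : ℂ) = 1/3 := by
  have hsum : (inner ℂ τ₁ τ₁ : ℂ) + inner ℂ τ₂ τ₂ = 2 / 3 := by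
    rw [ip_Phi10_self] at h10
    linear_combination 2 / 3 * h10
  have heq : (inner ℂ τ₁ τ₁ : ℂ) = inner ℂ τ₂ τ₂ := by
    have hsqrt3 : (Real.sqrt 3 : ℂ) / 2 ≠ 0 := by
      exact_mod_cast (div_pos (Real.sqrt_pos.2 three_pos) two_pos).ne'
    rw [ip_Phi00_Phi10, mul_eq_zero, sub_eq_zero] at horth
    exact (horth.resolve_left hsqrt3).symm
  exact ⟨by linear_combination hnorm - hsum, by linear_combination (hsum + heq) / 2,
    by linear_combination (hsum - heq) / 2⟩

/-- If `⟨τ₀,τ₀⟩+⟨τ₁,τ₁⟩+⟨τ₂,τ₂⟩ = 1`, the four vectors `Φᵢⱼ` are unit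
vectors, and `⟨Φ₀₀,Φ₁₀⟩ = 0`, then `⟨τ₀,τ₀⟩ = ⟨τ₁,τ₁⟩ = ⟨τ₂,τ₂⟩ = 1/3`. -/
theorem tau_norms_eq_third {H : Type*} [NormedAddCommGroup H] [InnerProductSpace ℂ H]
    (τ₀ τ₁ τ₂ : H)
    (hnorm : (inner ℂ τ₀ τ₀ : ℂ) + inner ℂ τ₁ τ₁ + inner ℂ τ₂ τ₂ = 1)
    (h00 : ip (Phi00 τ₀ τ₁ τ₂) (Phi00 τ₀ τ₁ τ₂) = 1)
    (h01 : ip (Phi01 τ₁ τ₂) (Phi01 τ₁ τ₂) = 1)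
    (h10 : ip (Phi10 τ₁ τ₂) (Phi10 τ₁ τ₂) = 1)
    (h11 : ip (Phi11 τ₀ τ₁ τ₂) (Phi11 τ₀ τ₁ τ₂) = 1)
    (horth : ip (Phi00 τ₀ τ₁ τ₂) (Phi10 τ₁ τ₂) = 0) :
    (inner ℂ τ₀ τ₀ : ℂ) = 1/3 ∧ (inner ℂ τ₁ τ₁ : ℂ) = 1/3 ∧ (inner ℂ τ₂ τ₂ : ℂ) = 1/3 :=
  tau_norms_eq_third_general τ₀ τ₁ τ₂ hnorm h10 horth
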